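/- arXiv:2501.02358 — 2 statements merged into one kernel-verified Lean document; each statement's English description precedes it below -/
import Mathlib

section
/- Let q ∈ ℕ and let f : {−1,0,…,q+1} → ℝ satisfy f(−1) = 0 and f(q+1) = 0. Define ∇f, Δf ∈ C[0,q]_Z by ∇f(ν) = f(ν) − f(ν−1) and Δf(ν) = f(ν+1) − f(ν) for ν ∈ [0,q]_Z. Then S^+(∇f) ≥ S^+(f) and S^+(Δf) ≥ S^+(f), where on the left-hand sides S^+ is computed for ∇f and Δf as elements of C[0,q]_Z and on the right-hand side for the restriction of f to [0,q]_Z. -/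
namespace DiscPaper

/-- `ν` is a zero (of the first or second type) of the discrete function `f` on `[0,q]_ℤ`. -/
def IsZero (q : ℕ) (f : ℕ → ℝ) (ν : ℕ) : Prop :=
  (ν ≤ q ∧ f ν = 0) ∨ (1 ≤ ν ∧ ν ≤ q ∧ f (ν - 1) * f ν < 0)

/-- `N q f` is the number of zeros (of both types) of `f` on `[0,q]_ℤ`. -/
noncomputable def N (q : ℕ) (f : ℕ → ℝ) : ℕ := {ν : ℕ | IsZero q f ν}.ncard

/-- `N₀ q f` is the number of zeros of the first type of `f` on `[0,q]_ℤ`. -/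
noncomputable def N0 (q : ℕ) (f : ℕ → ℝ) : ℕ := {ν : ℕ | ν ≤ q ∧ f ν = 0}.ncard

/-- Number of sign changes of `g` on `[0,q]_ℤ`. -/
noncomputable def signChanges (q : ℕ) (g : ℕ → ℝ) : ℕ :=
  {ν : ℕ | 1 ≤ ν ∧ ν ≤ q ∧ g (ν - 1) * g ν < 0}.ncard

/-- `g` is obtained from `f` by replacing all its zero values on `[0,q]_ℤ` by
arbitrary nonzero values. -/
def Admissible (q : ℕ) (f g : ℕ → ℝ) : Prop :=
  (∀ ν ≤ q, g ν ≠ 0) ∧ ∀ ν ≤ q, f ν ≠ 0 → g ν = f ν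

/-- `S⁻(f)`: least number of sign changes over all admissible replacements. -/
noncomputable def Sminus (q : ℕ) (f : ℕ → ℝ) : ℕ :=
  sInf {s | ∃ g, Admissible q f g ∧ signChanges q g = s}

/-- `S⁺(f)`: largest number of sign changes over all admissible replacements. -/
noncomputable def Splus (q : ℕ) (f : ℕ → ℝ) : ℕ :=
  sSup {s | ∃ g, Admissible q f g ∧ signChanges q g = s}

/- ### Auxiliary lemmas -/

private lemma changes_subset (q : ℕ) (g : ℕ → ℝ) :
    {ν : ℕ | 1 ≤ ν ∧ ν ≤ q ∧ g (ν - 1) * g ν < 0} ⊆ Set.Icc 1 q :=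
  fun ν h => ⟨h.1, h.2.1⟩

private lemma changes_finite (q : ℕ) (g : ℕ → ℝ) :
    {ν : ℕ | 1 ≤ ν ∧ ν ≤ q ∧ g (ν - 1) * g ν < 0}.Finite :=
  (Set.finite_Icc 1 q).subset (changes_subset q g)

private lemma icc_ncard (q : ℕ) : (Set.Icc 1 q).ncard = q := by
  rw [← Finset.coe_Icc, Set.ncard_coe_finset, Nat.card_Icc]; omega

private lemma signChanges_le (q : ℕ) (g : ℕ → ℝ) : signChanges q g ≤ q := by
  unfold signChanges
  calc {ν : ℕ | 1 ≤ ν ∧ ν ≤ q ∧ g (ν - 1) * g ν < 0}.ncard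
      ≤ (Set.Icc 1 q).ncard :=
        Set.ncard_le_ncard (changes_subset q g) (Set.finite_Icc 1 q)
    _ = q := icc_ncard q

private lemma neg_one_pow_mul_succ (m : ℕ) :
    ((-1:ℝ)^m) * ((-1:ℝ)^(m+1)) = -1 := by
  rcases Nat.even_or_odd m with h | h
  · rw [h.neg_one_pow, h.add_one.neg_one_pow]; ring
  · rw [h.neg_one_pow, h.add_one.neg_one_pow]; ring

/-- For a nowhere vanishing `g`, the sign changes of `g` and of `ν ↦ (-1)^ν g ν`
partition `[1,q]`. -/
private lemma parity (q : ℕ) (g : ℕ → ℝ) (hg : ∀ ν ≤ q, g ν ≠ 0) :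
    signChanges q g + signChanges q (fun ν => (-1:ℝ)^ν * g ν) = q := by
  unfold signChanges
  have hmul : ∀ m : ℕ,
      ((-1:ℝ)^m * g m) * ((-1:ℝ)^(m+1) * g (m+1)) = -(g m * g (m+1)) := by
    intro m
    have h := neg_one_pow_mul_succ m
    linear_combination (g m * g (m+1)) * h
  have hBsub : {ν : ℕ | 1 ≤ ν ∧ ν ≤ q ∧
      ((fun ν => (-1:ℝ)^ν * g ν) (ν - 1)) * ((fun ν => (-1:ℝ)^ν * g ν) ν) < 0}
      ⊆ Set.Icc 1 q := fun ν h => ⟨h.1, h.2.1⟩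
  have hdisj : Disjoint
      {ν : ℕ | 1 ≤ ν ∧ ν ≤ q ∧ g (ν - 1) * g ν < 0}
      {ν : ℕ | 1 ≤ ν ∧ ν ≤ q ∧
        ((fun ν => (-1:ℝ)^ν * g ν) (ν - 1)) * ((fun ν => (-1:ℝ)^ν * g ν) ν) < 0} := by
    rw [Set.disjoint_left]
    rintro ν ⟨h1, h2, h3⟩ ⟨_, _, h3'⟩
    obtain ⟨m, rfl⟩ : ∃ m, ν = m + 1 := ⟨ν - 1, by omega⟩
    simp only [Nat.add_sub_cancel] at h3 h3'
    rw [hmul m] at h3'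
    linarith
  have hunion :
      {ν : ℕ | 1 ≤ ν ∧ ν ≤ q ∧ g (ν - 1) * g ν < 0} ∪
      {ν : ℕ | 1 ≤ ν ∧ ν ≤ q ∧
        ((fun ν => (-1:ℝ)^ν * g ν) (ν - 1)) * ((fun ν => (-1:ℝ)^ν * g ν) ν) < 0}
      = Set.Icc 1 q := by
    apply Set.Subset.antisymm
    · exact Set.union_subset (changes_subset q g) hBsub
    · rintro ν ⟨h1, h2⟩
      obtain ⟨m, rfl⟩ : ∃ m, ν = m + 1 := ⟨ν - 1, by omega⟩
      have hne : g m * g (m+1) ≠ 0 :=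
        mul_ne_zero (hg m (by omega)) (hg (m+1) h2)
      rcases lt_or_gt_of_ne hne with h | h
      · left; exact ⟨h1, h2, by simpa [Nat.add_sub_cancel] using h⟩
      · right
        refine ⟨h1, h2, ?_⟩
        simp only [Nat.add_sub_cancel]
        rw [hmul m]
        linarith
  rw [← Set.ncard_union_eq hdisj (changes_finite q g)
      ((Set.finite_Icc 1 q).subset hBsub), hunion, icc_ncard]

/-- If `G` is nowhere zero and `G x * G y < 0` with `x < y ≤ q`, then `G` has a sign
change at some `μ ∈ (x, y]`. -/
private lemma exch (q : ℕ) (G : ℕ → ℝ) (hG : ∀ ν ≤ q, G ν ≠ 0) :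
    ∀ y, y ≤ q → ∀ x, x < y → G x * G y < 0 →
      ∃ μ, x < μ ∧ μ ≤ y ∧ 1 ≤ μ ∧ μ ≤ q ∧ G (μ - 1) * G μ < 0 := by
  intro y
  induction y using Nat.strong_induction_on with
  | _ y ih =>
    intro hyq x hxy hneg
    obtain ⟨m, rfl⟩ : ∃ m, y = m + 1 := ⟨y - 1, by omega⟩
    have hGm : G m ≠ 0 := hG m (by omega)
    have hGm1 : G (m+1) ≠ 0 := hG (m+1) hyq
    rcases lt_or_gt_of_ne (mul_ne_zero hGm hGm1) with h | h
    · exact ⟨m+1, by omega, le_refl _, by omega, hyq, by simpa [Nat.add_sub_cancel] using h⟩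
    · have hxm : G x * G m < 0 := by nlinarith [mul_self_pos.mpr hGm1]
      have hxm' : x ≠ m := by rintro rfl; nlinarith
      obtain ⟨μ, h1, h2, h3, h4, h5⟩ :=
        ih m (by omega) (by omega) x (by omega) hxm
      exact ⟨μ, h1, by omega, h3, h4, h5⟩

/-- Variation-diminishing key lemma: if each value `H ν` has the sign of some `G b`
with `b + j = ν + c`, `j ≤ 1`, then `H` has no more sign changes than `G`. -/
private lemma key (q c : ℕ) (H G : ℕ → ℝ) (hG : ∀ ν ≤ q, G ν ≠ 0)
    (hsel : ∀ ν, ν ≤ q → ∃ b j, b ≤ q ∧ j ≤ 1 ∧ b + j = ν + c ∧ H ν * G b > 0) :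
    signChanges q H ≤ signChanges q G := by
  classical
  choose β jj hβq hjj hβeq hβsign using hsel
  have hmono : ∀ x (hx : x ≤ q) y (hy : y ≤ q), x ≤ y → β x hx ≤ β y hy := by
    intro x hx y hy hxy
    rcases eq_or_lt_of_le hxy with rfl | h
    · exact le_refl _
    · have e1 := hβeq x hx; have e2 := hβeq y hy
      have j1 := hjj x hx; have j2 := hjj y hy; omega
  have main : ∀ μ, ∃ μ', (1 ≤ μ ∧ μ ≤ q ∧ H (μ - 1) * H μ < 0) →
      (1 ≤ μ' ∧ μ' ≤ q ∧ G (μ' - 1) * G μ' < 0) ∧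
      (∀ (h1 : μ - 1 ≤ q) (h2 : μ ≤ q), β (μ-1) h1 < μ' ∧ μ' ≤ β μ h2) := by
    intro μ
    by_cases hμ : 1 ≤ μ ∧ μ ≤ q ∧ H (μ - 1) * H μ < 0
    · obtain ⟨h1, h2, h3⟩ := hμ
      have hm1q : μ - 1 ≤ q := by omega
      have hs1 := hβsign (μ-1) hm1q
      have hs2 := hβsign μ h2
      have hGG : G (β (μ-1) hm1q) * G (β μ h2) < 0 := by nlinarith
      have hlt : β (μ-1) hm1q < β μ h2 := by
        have hle : β (μ-1) hm1q ≤ β μ h2 := by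
          have e1 := hβeq (μ-1) hm1q; have e2 := hβeq μ h2
          have j1 := hjj (μ-1) hm1q; have j2 := hjj μ h2; omega
        rcases eq_or_lt_of_le hle with he | h
        · exfalso; rw [he] at hGG; nlinarith
        · exact h
      obtain ⟨μ', hm1, hm2, hm3, hm4, hm5⟩ :=
        exch q G hG (β μ h2) (hβq μ h2) (β (μ-1) hm1q) hlt hGG
      exact ⟨μ', fun _ => ⟨⟨hm3, hm4, hm5⟩, fun h1' h2' => ⟨hm1, hm2⟩⟩⟩
    · exact ⟨0, fun h => absurd h hμ⟩
  choose Φ hΦ using main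
  unfold signChanges
  have hchain : ∀ a b : ℕ,
      (1 ≤ a ∧ a ≤ q ∧ H (a - 1) * H a < 0) →
      (1 ≤ b ∧ b ≤ q ∧ H (b - 1) * H b < 0) → a < b → Φ a < Φ b := by
    intro a b ha hb hab
    have haq : a ≤ q := ha.2.1
    have hbq : b ≤ q := hb.2.1
    have h1 := (hΦ a ha).2 (by omega) haq
    have h2 := (hΦ b hb).2 (by omega) hbq
    calc Φ a ≤ β a haq := h1.2
      _ ≤ β (b-1) (by omega) := hmono a haq (b-1) (by omega) (by omega)
      _ < Φ b := h2.1
  refine Set.ncard_le_ncard_of_injOn Φ ?_ ?_ (changes_finite q G)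
  · intro μ hμ
    exact (hΦ μ hμ).1
  · intro a ha b hb heq
    simp only [Set.mem_setOf_eq] at ha hb
    rcases lt_trichotomy a b with h | h | h
    · exact absurd heq (hchain a b ha hb h).ne
    · exact h
    · exact absurd heq.symm (hchain b a hb ha h).ne

private lemma signChanges_const_mul (q : ℕ) (g : ℕ → ℝ) (a : ℝ) (ha : a ≠ 0) :
    signChanges q (fun ν => a * g ν) = signChanges q g := by
  unfold signChanges
  congr 1
  ext ν
  simp only [Set.mem_setOf_eq]
  have ha2 : 0 < a * a := mul_self_pos.mpr ha
  constructor
  · rintro ⟨h1, h2, h3⟩; exact ⟨h1, h2, by nlinarith⟩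
  · rintro ⟨h1, h2, h3⟩; exact ⟨h1, h2, by nlinarith⟩

private lemma adm_default (q : ℕ) (f : ℕ → ℝ) :
    Admissible q f (fun ν => if f ν = 0 then 1 else f ν) := by
  constructor
  · intro ν _; by_cases h : f ν = 0 <;> simp [h]
  · intro ν _ h; simp [h]

private lemma sign_pick (x y : ℝ) (h : x + y ≠ 0) :
    (x ≠ 0 ∧ x * (x + y) > 0) ∨ (y ≠ 0 ∧ y * (x + y) > 0) := by
  rcases lt_or_gt_of_ne h with h' | h'
  · have : x < 0 ∨ y < 0 := by by_contra hq; push_neg at hq; linarith [hq.1, hq.2]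
    rcases this with hx | hy
    · exact Or.inl ⟨hx.ne, mul_pos_of_neg_of_neg hx h'⟩
    · exact Or.inr ⟨hy.ne, mul_pos_of_neg_of_neg hy h'⟩
  · have : 0 < x ∨ 0 < y := by by_contra hq; push_neg at hq; linarith [hq.1, hq.2]
    rcases this with hx | hy
    · exact Or.inl ⟨hx.ne', mul_pos hx h'⟩
    · exact Or.inr ⟨hy.ne', mul_pos hy h'⟩

/-- Main abstract step: if every nonzero value of `D ν = (-1)^(ν+c) u ν` has the sign
of some nearby `(-1)^b f b`, then `S⁺(u) ≥ S⁺(f)`. -/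
private lemma splus_ge_of_sel (q c : ℕ) (hc : c ≤ 1) (f u : ℕ → ℝ)
    (hsel : ∀ ν, ν ≤ q → (-1:ℝ)^(ν+c) * u ν ≠ 0 →
      ∃ b j, b ≤ q ∧ j ≤ 1 ∧ b + j = ν + c ∧ f b ≠ 0 ∧
        ((-1:ℝ)^b * f b) * ((-1:ℝ)^(ν+c) * u ν) > 0) :
    Splus q u ≥ Splus q f := by
  classical
  have hbdd : BddAbove {s | ∃ g, Admissible q u g ∧ signChanges q g = s} := by
    refine ⟨q, ?_⟩
    rintro s ⟨g, _, rfl⟩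
    exact signChanges_le q g
  unfold Splus
  apply csSup_le
  · exact ⟨_, _, adm_default q f, rfl⟩
  · rintro s ⟨g, hg, rfl⟩
    set D : ℕ → ℝ := fun ν => (-1:ℝ)^(ν+c) * u ν with hD
    set H : ℕ → ℝ := fun ν => if D ν = 0 then (-1:ℝ)^ν * g ν else D ν with hH
    have hGnz : ∀ ν ≤ q, (fun ν => (-1:ℝ)^ν * g ν) ν ≠ 0 := fun ν hν =>
      mul_ne_zero (pow_ne_zero _ (by norm_num)) (hg.1 ν hν)
    have hHnz : ∀ ν ≤ q, H ν ≠ 0 := by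
      intro ν hν
      by_cases h : D ν = 0
      · simpa [hH, h] using hGnz ν hν
      · simpa [hH, h] using h
    have hkey : signChanges q H ≤ signChanges q (fun ν => (-1:ℝ)^ν * g ν) := by
      apply key q c H _ hGnz
      intro ν hν
      by_cases h : D ν = 0
      · refine ⟨ν, c, hν, hc, rfl, ?_⟩
        have : H ν = (-1:ℝ)^ν * g ν := by simp [hH, h]
        rw [this]
        exact mul_self_pos.mpr (hGnz ν hν)
      · obtain ⟨b, j, hbq, hj, hbj, hfb, hsign⟩ := hsel ν hν h
        refine ⟨b, j, hbq, hj, hbj, ?_⟩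
        have hgb : g b = f b := hg.2 b hbq hfb
        have hHν : H ν = D ν := by simp [hH, h]
        show H ν * ((-1:ℝ)^b * g b) > 0
        rw [hHν, hgb, mul_comm]
        exact hsign
    have p1 := parity q g hg.1
    have p2 := parity q (fun ν => (-1:ℝ)^c * H ν)
      (fun ν hν => mul_ne_zero (pow_ne_zero _ (by norm_num)) (hHnz ν hν))
    have e1 : signChanges q (fun ν => (-1:ℝ)^c * H ν) = signChanges q H :=
      signChanges_const_mul q H _ (pow_ne_zero _ (by norm_num))
    have e2 : (fun ν => (-1:ℝ)^ν * ((fun ν => (-1:ℝ)^c * H ν) ν))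
        = fun ν => (-1:ℝ)^(ν+c) * H ν := by
      funext ν
      simp only [pow_add]
      ring
    rw [e1, e2] at p2
    have hadm : Admissible q u (fun ν => (-1:ℝ)^(ν+c) * H ν) := by
      constructor
      · intro ν hν
        exact mul_ne_zero (pow_ne_zero _ (by norm_num)) (hHnz ν hν)
      · intro ν hν hu
        have hDν : D ν ≠ 0 := by
          rw [hD]
          exact mul_ne_zero (pow_ne_zero _ (by norm_num)) hu
        have hHν : H ν = D ν := by simp [hH, hDν]
        show (-1:ℝ)^(ν+c) * H ν = u ν
        rw [hHν, hD, ← mul_assoc, ← pow_add, (Even.add_self (ν+c)).neg_one_pow, one_mul]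
    have hle : signChanges q g ≤ signChanges q (fun ν => (-1:ℝ)^(ν+c) * H ν) := by
      omega
    exact le_trans hle (le_csSup hbdd ⟨_, hadm, rfl⟩)

theorem stmt_15 (q : ℕ) (f : ℤ → ℝ) (hm1 : f (-1) = 0) (hq1 : f ((q : ℤ) + 1) = 0) :
    Splus q (fun ν : ℕ => f ν - f ((ν : ℤ) - 1)) ≥ Splus q (fun ν : ℕ => f ν) ∧
    Splus q (fun ν : ℕ => f ((ν : ℤ) + 1) - f ν) ≥ Splus q (fun ν : ℕ => f ν) := by
  constructor
  · apply splus_ge_of_sel q 0 (by norm_num)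
    intro ν hν hne
    simp only [Nat.add_zero] at *
    match ν, hν, hne with
    | 0, hν, hne =>
      have h0 : ((0:ℕ):ℤ) - 1 = -1 := by norm_num
      have hval : (-1:ℝ)^(0:ℕ) * (f ((0:ℕ):ℤ) - f (((0:ℕ):ℤ) - 1)) = f ((0:ℕ):ℤ) := by
        rw [h0, hm1]; ring
      refine ⟨0, 0, by omega, by omega, rfl, ?_, ?_⟩
      · intro h; apply hne; rw [hval, h]
      · rw [hval]
        have : f ((0:ℕ):ℤ) ≠ 0 := fun h => hne (by rw [hval, h])
        have := mul_self_pos.mpr this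
        calc ((-1:ℝ)^(0:ℕ) * f ((0:ℕ):ℤ)) * f ((0:ℕ):ℤ)
            = f ((0:ℕ):ℤ) * f ((0:ℕ):ℤ) := by ring
          _ > 0 := this
    | m+1, hν, hne =>
      have hcast : (((m+1:ℕ)):ℤ) - 1 = ((m:ℕ):ℤ) := by push_cast; ring
      have hxy : (-1:ℝ)^(m+1) * (f ((m+1:ℕ):ℤ) - f ((((m+1:ℕ)):ℤ) - 1))
          = ((-1:ℝ)^(m+1) * f ((m+1:ℕ):ℤ)) + ((-1:ℝ)^m * f ((m:ℕ):ℤ)) := by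
        rw [hcast]; ring
      have hne' : ((-1:ℝ)^(m+1) * f ((m+1:ℕ):ℤ)) + ((-1:ℝ)^m * f ((m:ℕ):ℤ)) ≠ 0 := by
        rw [← hxy]; exact hne
      rcases sign_pick _ _ hne' with ⟨hx0, hxp⟩ | ⟨hy0, hyp⟩
      · refine ⟨m+1, 0, hν, by omega, rfl, ?_, ?_⟩
        · intro h; apply hx0; rw [h]; ring
        · rw [hxy]; exact hxp
      · refine ⟨m, 1, by omega, by omega, rfl, ?_, ?_⟩
        · intro h; apply hy0; rw [h]; ring
        · rw [hxy]; exact hyp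
  · apply splus_ge_of_sel q 1 (by norm_num)
    intro ν hν hne
    by_cases hνq : ν = q
    · subst hνq
      have hval : (-1:ℝ)^(ν+1) * (f ((ν:ℤ) + 1) - f (ν:ℤ))
          = (-1:ℝ)^ν * f ((ν:ℕ):ℤ) := by
        rw [hq1]; ring
      have hf : f ((ν:ℕ):ℤ) ≠ 0 := by
        intro h; apply hne; rw [hval, h, mul_zero]
      refine ⟨ν, 1, le_refl _, le_refl _, rfl, hf, ?_⟩
      rw [hval]
      exact mul_self_pos.mpr (mul_ne_zero (pow_ne_zero _ (by norm_num)) hf)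
    · have hltq : ν < q := lt_of_le_of_ne hν hνq
      have hcast : ((ν:ℕ):ℤ) + 1 = (((ν+1:ℕ)):ℤ) := by push_cast; ring
      have hxy : (-1:ℝ)^(ν+1) * (f ((ν:ℤ) + 1) - f (ν:ℤ))
          = ((-1:ℝ)^(ν+1) * f ((ν+1:ℕ):ℤ)) + ((-1:ℝ)^ν * f ((ν:ℕ):ℤ)) := by
        rw [hcast]; ring
      have hne' : ((-1:ℝ)^(ν+1) * f ((ν+1:ℕ):ℤ)) + ((-1:ℝ)^ν * f ((ν:ℕ):ℤ)) ≠ 0 := by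
        rw [← hxy]; exact hne
      rcases sign_pick _ _ hne' with ⟨hx0, hxp⟩ | ⟨hy0, hyp⟩
      · refine ⟨ν+1, 0, by omega, by omega, rfl, ?_, ?_⟩
        · intro h; apply hx0; rw [h]; ring
        · rw [hxy]; exact hxp
      · refine ⟨ν, 1, by omega, by omega, rfl, ?_, ?_⟩
        · intro h; apply hy0; rw [h]; ring
        · rw [hxy]; exact hyp

end DiscPaper
end

section
/- Let q ∈ ℕ, q ≥ 1, and m ∈ {0,1,…,q}. There exist unique real numbers a_0, a_1, …, a_{q−m} such that for all x ∈ ℝ, cos((q+1)x) = (a_0/2 + Σ_{ν=1}^{q−m} a_ν cos(νx)) · ∏_{j=1}^{m+1} (cos x − cos(π(2j−1)/(2q+2))), and these numbers satisfy a_0 > a_1 > ⋯ > a_{q−m} > 0. -/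
/-!
Put `n = q + 1`, `h = π / (2n)` and `d = q - m`. The roots of `T_n` are the `cos ((2k+1)h)`,
`k < n`, and `cos (π - θ) = -cos θ` pairs the `d` roots left over after removing the `m + 1` largest
with the `d` largest ones, so the quotient is `2^q ∏_{k<d} (cos x + cos ((2k+1)h))`.

This product expands as `2^(-d) ∑_{j ≤ 2d} [2d, j] cos ((d - j) x)`, where `[N, j]` is a Gaussian
binomial coefficient: multiplying by `2 (cos x + cos ((2d+1)h))` acts on the coefficients as the
three-term recurrence `[N+2, j+2] = [N, j+2] + 2 cos ((N+1)h) [N, j+1] + [N, j]`, which after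
clearing denominators is a product-to-sum identity for sines. Hence
`a_ν = 2^m ([2d, d-ν] + [2d, d+ν])`. Since `[N, j+1] sin ((j+1)h) = [N, j] sin ((N-j)h)`, the
sequence `j ↦ [2d, j]` is positive and strictly increases up to `j = d`, then strictly decreases,
which gives `a_0 > a_1 > ⋯ > a_d > 0`.

Uniqueness: a cosine polynomial is a polynomial in `cos x` through the Chebyshev polynomials, which
have distinct degrees and so are linearly independent.
-/

open Real Finset Polynomial

theorem Polynomial.Chebyshev.T_real_eq_C_mul_prod (n : ℕ) :
    T ℝ n = Polynomial.C (2 ^ (n - 1)) *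
      ∏ k ∈ range n, (X - Polynomial.C (cos ((2 * k + 1) * π / (2 * n)))) := by
  have hinj : Set.InjOn (fun k : ℕ => cos ((2 * k + 1) * π / (2 * n))) (range n) :=
    (range n).nodup_map_iff_injOn.mp (roots_T_real_nodup n)
  have hcard : Multiset.card (T ℝ n).roots = (T ℝ n).natDegree := by
    rw [roots_T_real, natDegree_T, Int.natAbs_natCast, ← Finset.card_def, card_image_of_injOn hinj,
      card_range]
  conv_lhs => rw [← C_leadingCoeff_mul_prod_multiset_X_sub_C hcard]
  rw [leadingCoeff_T, Int.natAbs_natCast, roots_T_real, ← Finset.prod_eq_multiset_prod,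
    prod_image hinj]

theorem Polynomial.Chebyshev.eq_zero_of_sum_C_mul_T_eq_zero {R : Type*} [CommRing R] [IsDomain R]
    [NeZero (2 : R)] {D : ℕ} {e : ℕ → R} (h : ∑ ν ∈ range D, Polynomial.C (e ν) * T R ν = 0) :
    ∀ ν < D, e ν = 0 := by
  induction D with
  | zero => simp
  | succ D ih =>
    rw [sum_range_succ] at h
    have hlow : (∑ ν ∈ range D, Polynomial.C (e ν) * T R ν).coeff D = 0 := by
      rw [finsetSum_coeff]
      refine sum_eq_zero fun ν hν => ?_
      rw [coeff_C_mul, coeff_eq_zero_of_natDegree_lt (by simpa using hν), mul_zero]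
    have htop : (T R D).coeff D = 2 ^ (D - 1) := by
      have := leadingCoeff_T R D
      rwa [leadingCoeff, natDegree_T, Int.natAbs_natCast] at this
    have hcoeff := congrArg (coeff · D) h
    simp only [coeff_add, hlow, coeff_C_mul, htop, zero_add, coeff_zero] at hcoeff
    have heD : e D = 0 := (mul_eq_zero.1 hcoeff).resolve_right (pow_ne_zero _ two_ne_zero)
    rw [heD, map_zero, zero_mul, add_zero] at h
    intro ν hν
    rcases Nat.lt_succ_iff_lt_or_eq.1 hν with hν | rfl
    · exact ih h ν hν
    · exact heD

namespace DiscPaper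

theorem cos_nat_mul_eq_two_pow_mul_prod (n : ℕ) (x : ℝ) :
    cos (n * x) = 2 ^ (n - 1) * ∏ k ∈ range n, (cos x - cos ((2 * k + 1) * (π / (2 * n)))) := by
  have := congrArg (eval (cos x)) (Chebyshev.T_real_eq_C_mul_prod n)
  simpa [eval_prod, Chebyshev.T_real_cos, mul_div_assoc] using this

theorem prod_range_add_cos_sub_cos_eq {h : ℝ} (m d : ℕ) (hπ : 2 * (m + 1 + d : ℝ) * h = π)
    (x : ℝ) :
    ∏ k ∈ range (m + 1 + d), (cos x - cos ((2 * k + 1) * h)) =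
      (∏ j ∈ range (m + 1), (cos x - cos ((2 * j + 1) * h))) *
        ∏ k ∈ range d, (cos x + cos ((2 * k + 1) * h)) := by
  rw [prod_range_add, ← prod_range_reflect _ d]
  congr 1
  refine prod_congr rfl fun k hk => ?_
  have hk : k < d := mem_range.1 hk
  have hpi : (2 * ((m + 1 + (d - 1 - k) : ℕ) : ℝ) + 1) * h = π - (2 * k + 1) * h := by
    rw [Nat.cast_add, Nat.cast_sub (by omega), Nat.cast_sub (by omega)]
    push_cast
    linear_combination hπ
  rw [hpi, cos_pi_sub, sub_neg_eq_add]

theorem sin_lt_sin_of_lt_of_add_lt_pi {a b : ℝ} (ha : 0 < a) (hab : a < b) (hba : a + b < π) :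
    sin a < sin b := by
  have hsub : 0 < sin ((b - a) / 2) := sin_pos_of_pos_of_lt_pi (by linarith) (by linarith)
  have hadd : 0 < cos ((b + a) / 2) := cos_pos_of_mem_Ioo ⟨by linarith, by linarith⟩
  have := sin_sub_sin b a
  nlinarith [mul_pos hsub hadd]

theorem sin_add_mul_sin_add_sub (A B h : ℝ) :
    sin (A + B) * sin (A + B - h) =
      sin A * sin (A - h) + sin B * sin (B - h) + 2 * cos (A + B - h) * (sin A * sin B) := by
  simp only [sin_add, sin_sub, cos_add, cos_sub]
  linear_combination (cos h * sin A ^ 2 - sin h * sin A * cos A) * sin_sq_add_cos_sq B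
    + (cos h * sin B ^ 2 - sin h * sin B * cos B) * sin_sq_add_cos_sq A

theorem natCast_mul_pi_div_lt_pi {k n : ℕ} (hk : k < 2 * n) : (k : ℝ) * (π / (2 * n)) < π := by
  have hn : (0 : ℝ) < 2 * n := by exact_mod_cast (Nat.zero_le k).trans_lt hk
  rw [mul_div_assoc', div_lt_iff₀ hn, mul_comm π]
  gcongr
  exact_mod_cast hk

/-- The Gaussian binomial coefficient `[N, j]` at `exp (2ih)`, in the symmetric normalisation
`[k] = sin (kh) / sin h` of the quantum integers. -/
noncomputable def sineBinom (h : ℝ) (N j : ℕ) : ℝ :=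
  ∏ i ∈ range j, sin ((N - i) * h) / sin ((i + 1) * h)

section sineBinom

variable {h : ℝ} {N j : ℕ}

@[simp]
theorem sineBinom_zero_right : sineBinom h N 0 = 1 := by simp [sineBinom]

theorem sineBinom_succ_mul_sin (hj : sin ((j + 1) * h) ≠ 0) :
    sineBinom h N (j + 1) * sin ((j + 1) * h) = sineBinom h N j * sin ((N - j) * h) := by
  rw [sineBinom, prod_range_succ, ← sineBinom, mul_assoc, div_mul_cancel₀ _ hj]

theorem sineBinom_eq_zero_of_lt (hj : N < j) : sineBinom h N j = 0 :=
  prod_eq_zero (mem_range.2 hj) (by simp)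

theorem sineBinom_pos (hh : 0 < h) (hN : N * h < π) (hj : j ≤ N) : 0 < sineBinom h N j := by
  refine prod_pos fun i hi => div_pos ?_ ?_ <;>
  · have hi : (i : ℝ) + 1 ≤ N := by exact_mod_cast mem_range.1 hi |>.trans_le hj
    apply sin_pos_of_pos_of_lt_pi <;> nlinarith

theorem sineBinom_lt_sineBinom_succ (hh : 0 < h) (hN : (N + 1) * h < π) (hj : 2 * j + 1 < N) :
    sineBinom h N j < sineBinom h N (j + 1) := by
  have hjN : (2 * j + 1 : ℝ) < N := by exact_mod_cast hj
  have hs : sin ((j + 1) * h) < sin ((N - j) * h) :=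
    sin_lt_sin_of_lt_of_add_lt_pi (by positivity) (by nlinarith) (by nlinarith)
  have hpos : 0 < sin ((j + 1) * h) := sin_pos_of_pos_of_lt_pi (by positivity) (by nlinarith)
  have hG := sineBinom_pos hh (by nlinarith) (by omega : j ≤ N)
  refine lt_of_mul_lt_mul_right ?_ hpos.le
  rw [sineBinom_succ_mul_sin hpos.ne']
  gcongr

theorem sineBinom_succ_lt_sineBinom (hh : 0 < h) (hN : (N + 1) * h < π) (hj : N < 2 * j + 1)
    (hjN : j < N) : sineBinom h N (j + 1) < sineBinom h N j := by
  have hjN' : (j + 1 : ℝ) ≤ N := by exact_mod_cast hjN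
  have hj' : (N : ℝ) < 2 * j + 1 := by exact_mod_cast hj
  have hs : sin ((N - j) * h) < sin ((j + 1) * h) :=
    sin_lt_sin_of_lt_of_add_lt_pi (by nlinarith) (by nlinarith) (by nlinarith)
  have hpos : 0 < sin ((j + 1) * h) := sin_pos_of_pos_of_lt_pi (by positivity) (by nlinarith)
  have hG := sineBinom_pos hh (by nlinarith) hjN.le
  refine lt_of_mul_lt_mul_right ?_ hpos.le
  rw [sineBinom_succ_mul_sin hpos.ne']
  gcongr

theorem sineBinom_add_two_mul (h1 : sin ((j + 1) * h) ≠ 0) (h2 : sin ((j + 2) * h) ≠ 0) :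
    sineBinom h (N + 2) (j + 2) * (sin ((j + 1) * h) * sin ((j + 2) * h)) =
      sin ((N + 2) * h) * sin ((N + 1) * h) * sineBinom h N j := by
  have hnum : ∏ i ∈ range (j + 2), sin (((N + 2 : ℕ) - i : ℝ) * h) =
      (∏ i ∈ range j, sin ((N - i) * h)) * sin ((N + 1) * h) * sin ((N + 2) * h) := by
    rw [prod_range_succ', prod_range_succ']
    push_cast
    congr 2
    · exact prod_congr rfl fun i _ => by ring_nf
    · ring_nf
    · ring_nf
  have hden : ∏ i ∈ range (j + 2), sin (((i : ℕ) + 1 : ℝ) * h) =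
      (∏ i ∈ range j, sin ((i + 1) * h)) * sin ((j + 1) * h) * sin ((j + 2) * h) := by
    rw [prod_range_succ, prod_range_succ]
    push_cast
    rw [add_assoc, one_add_one_eq_two]
  simp only [sineBinom, prod_div_distrib, hnum, hden]
  generalize ∏ i ∈ range j, sin ((N - i) * h) = P
  generalize ∏ i ∈ range j, sin ((i + 1) * h) = Q
  rw [mul_assoc Q, ← div_div, div_mul_cancel₀ _ (mul_ne_zero h1 h2)]
  ring

theorem sineBinom_add_two_add_two (hh : 0 < h) (hN : (N + 2) * h < π) (j : ℕ) :
    sineBinom h (N + 2) (j + 2) =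
      sineBinom h N (j + 2) + 2 * cos ((N + 1) * h) * sineBinom h N (j + 1) + sineBinom h N j := by
  rcases le_or_gt j N with hj | hj
  · have hjN : (j : ℝ) ≤ N := by exact_mod_cast hj
    have h1 : 0 < sin ((j + 1) * h) := sin_pos_of_pos_of_lt_pi (by positivity) (by nlinarith)
    have h2 : 0 < sin ((j + 2) * h) := sin_pos_of_pos_of_lt_pi (by positivity) (by nlinarith)
    have hj2 : ((j + 1 : ℕ) : ℝ) + 1 = j + 2 := by push_cast; ring
    have hG1 := sineBinom_succ_mul_sin (N := N) h1.ne'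
    have hG2 := sineBinom_succ_mul_sin (N := N) (j := j + 1) (by rw [hj2]; exact h2.ne')
    rw [hj2, show ((N : ℝ) - (j + 1 : ℕ)) * h = (N - j) * h - h by push_cast; ring] at hG2
    have hG' := sineBinom_add_two_mul (N := N) h1.ne' h2.ne'
    have hsin := sin_add_mul_sin_add_sub ((N - j) * h) ((j + 2) * h) h
    rw [show (N - j) * h + (j + 2) * h = (N + 2) * h by ring,
      show (N + 2) * h - h = (N + 1) * h by ring,
      show (j + 2) * h - h = (j + 1) * h by ring] at hsin
    apply mul_right_cancel₀ (mul_pos h1 h2).ne'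
    linear_combination hG' - sin ((j + 1) * h) * hG2 - sin ((N - j) * h - h) * hG1
      - 2 * cos ((N + 1) * h) * sin ((j + 2) * h) * hG1 + sineBinom h N j * hsin
  · simp [sineBinom_eq_zero_of_lt, hj, hj.trans (Nat.lt_succ_self j),
      hj.trans (by omega : j < j + 2)]

theorem sineBinom_add_two_one (hs : sin h ≠ 0) :
    sineBinom h (N + 2) 1 = sineBinom h N 1 + 2 * cos ((N + 1) * h) := by
  have := sin_sub_sin ((N + 2) * h) (N * h)
  simp only [sineBinom, prod_range_one, Nat.cast_zero, sub_zero, zero_add, one_mul]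
  push_cast
  rw [eq_add_of_sub_eq this]
  field_simp
  ring_nf

theorem sum_range_sineBinom_mul_of_le {M : ℕ} (hM : N + 1 ≤ M) (f : ℕ → ℝ) :
    ∑ j ∈ range M, sineBinom h N j * f j = ∑ j ∈ range (N + 1), sineBinom h N j * f j :=
  (sum_subset (range_subset_range.2 hM) fun j _ hj => by
    rw [sineBinom_eq_zero_of_lt (by simpa using hj), zero_mul]).symm

theorem sum_range_sineBinom_add_two_mul (hh : 0 < h) (hN : (N + 2) * h < π) (f : ℕ → ℝ) :
    ∑ j ∈ range (N + 3), sineBinom h (N + 2) j * f j =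
      ∑ j ∈ range (N + 1),
        sineBinom h N j * (f j + 2 * cos ((N + 1) * h) * f (j + 1) + f (j + 2)) := by
  set G := sineBinom h N
  set c := cos ((N + 1) * h)
  have hs : sin h ≠ 0 := (sin_pos_of_pos_of_lt_pi hh (by nlinarith)).ne'
  have hshift0 : ∑ j ∈ range (N + 1), G j * f j =
      ∑ j ∈ range (N + 1), G (j + 2) * f (j + 2) + G 1 * f 1 + G 0 * f 0 := by
    rw [← sum_range_sineBinom_mul_of_le (by omega : N + 1 ≤ N + 1 + 1 + 1), sum_range_succ',
      sum_range_succ']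
  have hshift1 : ∑ j ∈ range (N + 1), G j * f (j + 1) =
      ∑ j ∈ range (N + 1), G (j + 1) * f (j + 2) + G 0 * f 1 := by
    rw [← sum_range_sineBinom_mul_of_le (by omega : N + 1 ≤ N + 1 + 1), sum_range_succ']
  have hlhs : ∑ j ∈ range (N + 1), sineBinom h (N + 2) (j + 1 + 1) * f (j + 1 + 1) =
      ∑ j ∈ range (N + 1), G (j + 2) * f (j + 2)
        + 2 * c * ∑ j ∈ range (N + 1), G (j + 1) * f (j + 2)
        + ∑ j ∈ range (N + 1), G j * f (j + 2) := by
    rw [mul_sum, ← sum_add_distrib, ← sum_add_distrib]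
    exact sum_congr rfl fun j _ => by rw [sineBinom_add_two_add_two hh hN]; ring
  have hrhs : ∑ j ∈ range (N + 1), G j * (f j + 2 * c * f (j + 1) + f (j + 2)) =
      ∑ j ∈ range (N + 1), G j * f j + 2 * c * ∑ j ∈ range (N + 1), G j * f (j + 1)
        + ∑ j ∈ range (N + 1), G j * f (j + 2) := by
    rw [mul_sum, ← sum_add_distrib, ← sum_add_distrib]
    exact sum_congr rfl fun j _ => by ring
  rw [sum_range_succ', sum_range_succ', hlhs, hrhs, hshift0, hshift1, sineBinom_add_two_one hs]
  simp only [G, sineBinom_zero_right]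
  ring

end sineBinom

noncomputable def sineBinomCosSum (h : ℝ) (d : ℕ) (x : ℝ) : ℝ :=
  ∑ j ∈ range (2 * d + 1), sineBinom h (2 * d) j * cos ((d - j) * x)

theorem sineBinomCosSum_succ {h : ℝ} {d : ℕ} (hh : 0 < h) (hd : (2 * d + 2) * h < π) (x : ℝ) :
    sineBinomCosSum h (d + 1) x = 2 * (cos x + cos ((2 * d + 1) * h)) * sineBinomCosSum h d x := by
  have hN : ((2 * d : ℕ) + 2 : ℝ) * h < π := by push_cast; linarith
  rw [sineBinomCosSum, sineBinomCosSum, show 2 * (d + 1) + 1 = 2 * d + 3 by ring,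
    show 2 * (d + 1) = 2 * d + 2 by ring, sum_range_sineBinom_add_two_mul hh hN, mul_sum]
  refine sum_congr rfl fun j _ => ?_
  rw [mul_left_comm]
  congr 1
  push_cast
  rw [show (d + 1 - j : ℝ) * x = (d - j) * x + x by ring,
    show (d + 1 - (j + 1) : ℝ) * x = (d - j) * x by ring,
    show (d + 1 - (j + 2) : ℝ) * x = (d - j) * x - x by ring, cos_add, cos_sub]
  ring

theorem prod_two_mul_cos_add_cos_eq_sineBinomCosSum {h : ℝ} {d : ℕ} (hh : 0 < h)
    (hd : 2 * d * h < π) (x : ℝ) :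
    ∏ k ∈ range d, 2 * (cos x + cos ((2 * k + 1) * h)) = sineBinomCosSum h d x := by
  induction d with
  | zero => simp [sineBinomCosSum]
  | succ d ih =>
    push_cast at hd
    rw [prod_range_succ, ih (by nlinarith), sineBinomCosSum_succ hh (by linarith), mul_comm]

theorem sum_Icc_one_eq_sum_range {M : Type*} [AddCommMonoid M] (f : ℕ → M) (D : ℕ) :
    ∑ ν ∈ Icc 1 D, f ν = ∑ k ∈ range D, f (k + 1) := by
  rw [← Ico_add_one_right_eq_Icc, sum_Ico_eq_sum_range, Nat.add_sub_cancel]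
  simp only [add_comm 1]

noncomputable def cosPoly (a : ℕ → ℝ) (D : ℕ) (x : ℝ) : ℝ :=
  a 0 / 2 + ∑ ν ∈ Icc 1 D, a ν * cos (ν * x)

theorem cosPoly_sub (a b : ℕ → ℝ) (D : ℕ) (x : ℝ) :
    cosPoly a D x - cosPoly b D x = cosPoly (a - b) D x := by
  simp only [cosPoly, Pi.sub_apply, sub_mul, sum_sub_distrib]
  ring

theorem cosPoly_const_mul (c : ℝ) (a : ℕ → ℝ) (D : ℕ) (x : ℝ) :
    c * cosPoly a D x = cosPoly (fun ν => c * a ν) D x := by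
  simp only [cosPoly, mul_add, mul_sum, mul_assoc, mul_div_assoc]

theorem sum_range_two_mul_add_one_mul_cos (G : ℕ → ℝ) (d : ℕ) (x : ℝ) :
    ∑ j ∈ range (2 * d + 1), G j * cos ((d - j) * x) =
      cosPoly (fun ν => G (d - ν) + G (d + ν)) d x := by
  have hlow (k) (hk : k ∈ range d) : G (d - 1 - k) * cos ((d - (d - 1 - k : ℕ)) * x) =
      G (d - (k + 1)) * cos ((k + 1 : ℕ) * x) := by
    rw [Nat.cast_sub (by simp at hk; omega), Nat.cast_sub (by simp at hk; omega),
      show d - 1 - k = d - (k + 1) by omega]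
    push_cast
    ring_nf
  have hhigh (k) (_ : k ∈ range d) : G (d + (k + 1)) * cos ((d - (d + (k + 1) : ℕ)) * x) =
      G (d + (k + 1)) * cos ((k + 1 : ℕ) * x) := by
    rw [← cos_neg]
    push_cast
    ring_nf
  rw [show 2 * d + 1 = d + (d + 1) by ring, sum_range_add, sum_range_succ', ← sum_range_reflect,
    cosPoly, sum_Icc_one_eq_sum_range, sum_congr rfl hlow, sum_congr rfl hhigh]
  simp only [add_mul, sum_add_distrib]
  simp
  ring

theorem cosPoly_eq_eval (a : ℕ → ℝ) (D : ℕ) (x : ℝ) :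
    cosPoly a D x =
      (∑ ν ∈ range (D + 1), C (if ν = 0 then a 0 / 2 else a ν) * Chebyshev.T ℝ ν).eval (cos x) := by
  rw [eval_finsetSum, cosPoly, sum_Icc_one_eq_sum_range, sum_range_succ', add_comm]
  simp [Chebyshev.T_real_cos]

theorem eq_zero_of_cosPoly_mul_eval_eq_zero {a : ℕ → ℝ} {D : ℕ} {P : ℝ[X]} (hP : P ≠ 0)
    (h : ∀ x, cosPoly a D x * P.eval (cos x) = 0) : ∀ ν ≤ D, a ν = 0 := by
  set p := ∑ ν ∈ range (D + 1), C (if ν = 0 then a 0 / 2 else a ν) * Chebyshev.T ℝ ν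
  have hroots : Set.Icc (-1 : ℝ) 1 ⊆ {y | (p * P).IsRoot y} := fun y hy => by
    show (p * P).eval y = 0
    rw [eval_mul, ← cos_arccos hy.1 hy.2, ← cosPoly_eq_eval, h]
  have hp : p = 0 :=
    (mul_eq_zero.1 (eq_zero_of_infinite_isRoot _ ((Set.Icc_infinite (by norm_num)).mono hroots))
      ).resolve_right hP
  intro ν hν
  have := Chebyshev.eq_zero_of_sum_C_mul_T_eq_zero hp ν (Nat.lt_succ_of_le hν)
  split_ifs at this with h0
  · subst h0; linarith
  · exact this

noncomputable def quotCoeff (q m ν : ℕ) : ℝ :=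
  let G := sineBinom (π / (2 * (q + 1 : ℕ))) (2 * (q - m))
  2 ^ m * (G (q - m - ν) + G (q - m + ν))

theorem cos_succ_mul_eq_cosPoly_quotCoeff_mul_prod {q m : ℕ} (hm : m ≤ q) (x : ℝ) :
    cos ((q + 1) * x) = cosPoly (quotCoeff q m) (q - m) x *
      ∏ j ∈ range (m + 1), (cos x - cos (π * (2 * j + 1) / (2 * q + 2))) := by
  obtain ⟨d, rfl⟩ := Nat.exists_eq_add_of_le hm
  have hn : m + d + 1 = m + 1 + d := by ring
  have hd : 2 * (d : ℝ) * (π / (2 * (m + 1 + d : ℕ))) < π := by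
    exact_mod_cast natCast_mul_pi_div_lt_pi (k := 2 * d) (n := m + 1 + d) (by omega)
  set h := π / (2 * (m + 1 + d : ℕ)) with h_def
  have hh : 0 < h := by positivity
  have hπ : 2 * (m + 1 + d : ℝ) * h = π := by
    rw [h_def]
    push_cast
    field_simp
  have hroot (j : ℕ) : π * (2 * j + 1) / (2 * (m + d : ℕ) + 2) = (2 * j + 1) * h := by
    rw [h_def]
    push_cast
    field_simp
    ring
  have hcoeff : quotCoeff (m + d) m =
      fun ν => 2 ^ m * (sineBinom h (2 * d) (d - ν) + sineBinom h (2 * d) (d + ν)) := by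
    funext ν
    simp only [quotCoeff, hn, Nat.add_sub_cancel_left, h]
  rw [Nat.add_sub_cancel_left, hcoeff, ← cosPoly_const_mul, ← sum_range_two_mul_add_one_mul_cos,
    ← sineBinomCosSum, ← prod_two_mul_cos_add_cos_eq_sineBinomCosSum hh hd]
  simp_rw [hroot]
  rw [show ((m + d : ℕ) : ℝ) + 1 = ((m + 1 + d : ℕ) : ℝ) by push_cast; ring,
    cos_nat_mul_eq_two_pow_mul_prod, ← h_def, prod_range_add_cos_sub_cos_eq m d hπ,
    prod_mul_distrib, prod_const, card_range, show m + 1 + d - 1 = m + d by omega, pow_add]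
  ring

theorem eq_quotCoeff_of_cos_succ_mul_eq {q m : ℕ} (hm : m ≤ q) {b : ℕ → ℝ}
    (hb : ∀ x, cos ((q + 1) * x) = cosPoly b (q - m) x *
      ∏ j ∈ range (m + 1), (cos x - cos (π * (2 * j + 1) / (2 * q + 2)))) :
    ∀ l ≤ q - m, b l = quotCoeff q m l := by
  have hP : ∏ j ∈ range (m + 1), (X - C (cos (π * (2 * j + 1) / (2 * q + 2)))) ≠ 0 :=
    (monic_prod_of_monic _ _ fun j _ => monic_X_sub_C _).ne_zero
  refine fun l hl => sub_eq_zero.1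
    (eq_zero_of_cosPoly_mul_eval_eq_zero (a := b - quotCoeff q m) hP (fun x => ?_) l hl)
  simp only [← cosPoly_sub, sub_mul, eval_prod, eval_sub, eval_X, eval_C]
  rw [← hb x, ← cos_succ_mul_eq_cosPoly_quotCoeff_mul_prod hm x, sub_self]

theorem quotCoeff_succ_lt {q m l : ℕ} (hl : l < q - m) :
    quotCoeff q m (l + 1) < quotCoeff q m l := by
  have hh : 0 < π / (2 * (q + 1 : ℕ)) := by positivity
  have hN : ((2 * (q - m) : ℕ) + 1 : ℝ) * (π / (2 * (q + 1 : ℕ))) < π := by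
    exact_mod_cast natCast_mul_pi_div_lt_pi (k := 2 * (q - m) + 1) (by omega)
  have hlow := sineBinom_lt_sineBinom_succ (j := q - m - (l + 1)) hh hN (by omega)
  have hhigh := sineBinom_succ_lt_sineBinom (j := q - m + l) hh hN (by omega) (by omega)
  rw [show q - m - (l + 1) + 1 = q - m - l by omega] at hlow
  exact mul_lt_mul_of_pos_left (add_lt_add hlow hhigh) (by positivity)

theorem quotCoeff_pos {q m : ℕ} : 0 < quotCoeff q m (q - m) := by
  have hh : 0 < π / (2 * (q + 1 : ℕ)) := by positivity
  have hN : ((2 * (q - m) : ℕ) : ℝ) * (π / (2 * (q + 1 : ℕ))) < π :=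
    natCast_mul_pi_div_lt_pi (by omega)
  exact mul_pos (by positivity)
    (add_pos (sineBinom_pos hh hN (by omega)) (sineBinom_pos hh hN (by omega)))

theorem stmt_19_general (q m : ℕ) (hm : m ≤ q) :
    ∃ a : ℕ → ℝ,
      (∀ x : ℝ, Real.cos (((q : ℝ) + 1) * x) =
        (a 0 / 2 + ∑ ν ∈ Finset.Icc 1 (q - m), a ν * Real.cos ((ν : ℝ) * x)) *
          ∏ j ∈ Finset.range (m + 1),
            (Real.cos x - Real.cos (π * (2 * (j : ℝ) + 1) / (2 * (q : ℝ) + 2)))) ∧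
      (∀ b : ℕ → ℝ,
        (∀ x : ℝ, Real.cos (((q : ℝ) + 1) * x) =
          (b 0 / 2 + ∑ ν ∈ Finset.Icc 1 (q - m), b ν * Real.cos ((ν : ℝ) * x)) *
            ∏ j ∈ Finset.range (m + 1),
              (Real.cos x - Real.cos (π * (2 * (j : ℝ) + 1) / (2 * (q : ℝ) + 2)))) →
        ∀ l ≤ q - m, b l = a l) ∧
      (∀ l, l < q - m → a (l + 1) < a l) ∧ 0 < a (q - m) :=
  ⟨quotCoeff q m, cos_succ_mul_eq_cosPoly_quotCoeff_mul_prod hm,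
    fun _ hb => eq_quotCoeff_of_cos_succ_mul_eq hm hb, fun _ hl => quotCoeff_succ_lt hl,
    quotCoeff_pos⟩

/-- for `q ≥ 1` and `0 ≤ m ≤ q` there are unique reals `a_0,…,a_{q-m}`
with
`cos((q+1)x) = (a_0/2 + Σ_{ν=1}^{q-m} a_ν cos(νx)) ⬝ ∏_{j=1}^{m+1} (cos x - cos(π(2j-1)/(2q+2)))`
for all `x`, and they satisfy `a_0 > a_1 > ⋯ > a_{q-m} > 0`. -/
theorem stmt_19 (q m : ℕ) (hq : 1 ≤ q) (hm : m ≤ q) :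
    ∃ a : ℕ → ℝ,
      (∀ x : ℝ, Real.cos (((q : ℝ) + 1) * x) =
        (a 0 / 2 + ∑ ν ∈ Finset.Icc 1 (q - m), a ν * Real.cos ((ν : ℝ) * x)) *
          ∏ j ∈ Finset.range (m + 1),
            (Real.cos x - Real.cos (π * (2 * (j : ℝ) + 1) / (2 * (q : ℝ) + 2)))) ∧
      (∀ b : ℕ → ℝ,
        (∀ x : ℝ, Real.cos (((q : ℝ) + 1) * x) =
          (b 0 / 2 + ∑ ν ∈ Finset.Icc 1 (q - m), b ν * Real.cos ((ν : ℝ) * x)) *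
            ∏ j ∈ Finset.range (m + 1),
              (Real.cos x - Real.cos (π * (2 * (j : ℝ) + 1) / (2 * (q : ℝ) + 2)))) →
        ∀ l ≤ q - m, b l = a l) ∧
      (∀ l, l < q - m → a (l + 1) < a l) ∧ 0 < a (q - m) :=
  stmt_19_general q m hm

end DiscPaper
end
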